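/- Let r ≥ 1 and suppose Γ_D(w) is a letter graph over an alphabet Σ of size exactly r with decoder D such that Γ_D(w) is isomorphic to rK₂. Then every letter a ∈ Σ occurs at exactly two positions of w, and these two positions are adjacent in Γ_D(w); that is, in every r-lettering of rK₂ each letter encodes precisely the two vertices of one edge of the matching. -/

import Mathlib

/-!
Transported along the isomorphism, every position of `w` has exactly one neighbour. If two
occurrences `i < k` of a letter are non-adjacent, every neighbour of `i` or `k` lies strictly
between them, since a position outside `[i, k]` sees `i` and `k` alike. Hence no letter occurs
three times, and since the word has length `2r` over `r` letters, each letter occurs exactly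
twice. Finally, if the two occurrences `p < y` of some letter were non-adjacent, the neighbour
`m` of `y` lies in `(p, y)`, the two occurrences of the letter of `m` are non-adjacent and `y`
lies strictly between them: this produces a non-adjacent pair ending after `y`, which is
impossible for the last such pair.
-/

/-- The letter graph `Γ_D(w)` of a word `w = w₁…wₙ` (positions indexed by `Fin n`) over an
alphabet `α` with decoder `D ⊆ α × α`: distinct positions `i < j` are adjacent
iff `(w i, w j) ∈ D`. -/
def letterGraph {α : Type*} {n : ℕ} (D : α → α → Prop) (w : Fin n → α) :
    SimpleGraph (Fin n) where
  Adj i j := (i < j ∧ D (w i) (w j)) ∨ (j < i ∧ D (w j) (w i))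
  symm := by
    constructor
    intro i j h
    rcases h with h | h
    · exact Or.inr h
    · exact Or.inl h
  loopless := by
    constructor
    intro i h
    rcases h with ⟨h, -⟩ | ⟨h, -⟩ <;> exact absurd h (lt_irrefl i)

/-- A graph `G` is a `k`-letter graph if it is isomorphic to the letter graph of some
word over an alphabet of size `k` (we take the alphabet to be `Fin k`). -/
def IsKLetterGraph (k : ℕ) {V : Type*} (G : SimpleGraph V) : Prop :=
  ∃ (n : ℕ) (D : Fin k → Fin k → Prop) (w : Fin n → Fin k),
    Nonempty (G ≃g letterGraph D w)

/-- The lettericity of a graph: the least `k` such that `G` is a `k`-letter graph. -/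
noncomputable def lettericity {V : Type*} (G : SimpleGraph V) : ℕ :=
  sInf {k | IsKLetterGraph k G}

/-- The graph `rK₂`: the disjoint union of `r` edges (a perfect matching on `2r`
vertices), the edges being `{2t, 2t+1}` for `0 ≤ t < r`. -/
def matchingGraph (r : ℕ) : SimpleGraph (Fin (2 * r)) where
  Adj i j := i ≠ j ∧ (i : ℕ) / 2 = (j : ℕ) / 2
  symm := by
    constructor
    intro i j h
    exact ⟨h.1.symm, h.2.symm⟩
  loopless := by
    constructor
    intro i h
    exact h.1 rfl

open Finset

lemma matchingGraph_existsUnique_adj (r : ℕ) (v : Fin (2 * r)) :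
    ∃! u, (matchingGraph r).Adj v u := by
  have hv := v.isLt
  refine ⟨⟨if (v : ℕ) % 2 = 0 then v + 1 else v - 1, by split <;> omega⟩, ?_, ?_⟩
  · refine ⟨fun h => ?_, ?_⟩
    · have := congrArg Fin.val h
      simp only at this
      split at this <;> omega
    · simp only
      split <;> omega
  · rintro u ⟨hne, hdiv⟩
    have : (v : ℕ) ≠ u := Fin.val_ne_of_ne hne
    ext
    simp only
    split <;> omega

theorem SimpleGraph.Iso.existsUnique_adj {V W : Type*} {G : SimpleGraph V} {H : SimpleGraph W}
    (e : G ≃g H) (hG : ∀ v, ∃! u, G.Adj v u) (v : W) : ∃! u, H.Adj v u := by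
  obtain ⟨u, hu, huniq⟩ := hG (e.symm v)
  refine ⟨e u, by simpa using e.map_adj_iff.mpr hu, fun u' hu' => ?_⟩
  rw [← e.symm_apply_eq, huniq _ (e.symm.map_adj_iff.mpr hu')]

lemma Finset.card_fiber_eq_of_card_fiber_le {β α : Type*} [Fintype β] [Fintype α]
    [DecidableEq α] {f : β → α} {k : ℕ} (hle : ∀ a, #{b | f b = a} ≤ k)
    (hcard : Fintype.card β = k * Fintype.card α) (a : α) : #{b | f b = a} = k := by
  have hsum : ∑ a, #{b | f b = a} = ∑ _a : α, k := by
    rw [← card_eq_sum_card_fiberwise (fun b _ => mem_univ (f b)), sum_const, card_univ,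
      smul_eq_mul, mul_comm, card_univ, hcard]
  exact (sum_eq_sum_iff_of_le fun a _ => hle a).mp hsum a (mem_univ a)

namespace letterGraph

variable {α : Type*} {n : ℕ} {D : α → α → Prop} {w : Fin n → α}

lemma adj_congr {m i k : Fin n} (hw : w i = w k) (hside : m < i ↔ m < k) (hmi : m ≠ i)
    (hmk : m ≠ k) : (letterGraph D w).Adj m i ↔ (letterGraph D w).Adj m k := by
  simp only [letterGraph, hw]
  have := hmi.lt_or_gt
  have := hmk.lt_or_gt
  constructor <;> rintro (⟨h, hD⟩ | ⟨h, hD⟩) <;> grind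

variable (hG : ∀ v, ∃! u, (letterGraph D w).Adj v u)
include hG

lemma mem_Ioo_of_adj {i k x m : Fin n} (hik : i < k) (hw : w i = w k)
    (hnadj : ¬ (letterGraph D w).Adj i k) (hx : x = i ∨ x = k) (hm : (letterGraph D w).Adj x m) :
    m ∈ Set.Ioo i k := by
  have hmi : m ≠ i := by rintro rfl; rcases hx with rfl | rfl; exacts [hm.ne rfl, hnadj hm.symm]
  have hmk : m ≠ k := by rintro rfl; rcases hx with rfl | rfl; exacts [hnadj hm, hm.ne rfl]
  by_contra hout
  have hside : m < i ↔ m < k := by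
    simp only [Set.mem_Ioo, not_and_or, not_lt] at hout
    constructor <;> intro h <;> rcases hout with h' | h' <;> order
  have hadj_i : (letterGraph D w).Adj m i := by
    rcases hx with rfl | rfl
    exacts [hm.symm, (adj_congr hw hside hmi hmk).mpr hm.symm]
  exact hik.ne ((hG m).unique hadj_i ((adj_congr hw hside hmi hmk).mp hadj_i))

lemma false_of_lt_of_lt_of_eq_of_eq {i j k : Fin n} (hij : i < j) (hjk : j < k)
    (hwij : w i = w j) (hwjk : w j = w k) : False := by
  by_cases hD : D (w i) (w i)
  · have hj : (letterGraph D w).Adj i j := Or.inl ⟨hij, hwij ▸ hD⟩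
    have hk : (letterGraph D w).Adj i k := Or.inl ⟨hij.trans hjk, hwjk ▸ hwij ▸ hD⟩
    exact hjk.ne ((hG i).unique hj hk)
  · have hnij : ¬ (letterGraph D w).Adj i j := by
      rintro (⟨-, h⟩ | ⟨h, -⟩)
      exacts [hD (hwij ▸ h), h.not_gt hij]
    have hnjk : ¬ (letterGraph D w).Adj j k := by
      rintro (⟨-, h⟩ | ⟨h, -⟩)
      exacts [hD (hwij ▸ hwjk ▸ h), h.not_gt hjk]
    obtain ⟨m, hm, -⟩ := hG j
    exact (mem_Ioo_of_adj hG hij hwij hnij (Or.inr rfl) hm).2.not_gt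
      (mem_Ioo_of_adj hG hjk hwjk hnjk (Or.inl rfl) hm).1

lemma card_fiber_le_two [DecidableEq α] (a : α) : #{j | w j = a} ≤ 2 := by
  by_contra! h
  let f := orderEmbOfFin {j | w j = a} rfl
  have hf (t : Fin #{j | w j = a}) : w (f t) = a := (mem_filter.mp (orderEmbOfFin_mem _ rfl t)).2
  have h01 : (⟨0, by omega⟩ : Fin #{j | w j = a}) < ⟨1, by omega⟩ :=
    Fin.mk_lt_mk.mpr zero_lt_one
  have h12 : (⟨1, by omega⟩ : Fin #{j | w j = a}) < ⟨2, h⟩ := Fin.mk_lt_mk.mpr one_lt_two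
  exact false_of_lt_of_lt_of_eq_of_eq hG (f.strictMono h01) (f.strictMono h12)
    ((hf _).trans (hf _).symm) ((hf _).trans (hf _).symm)

variable (hpair : ∀ j, ∃ j', j' ≠ j ∧ w j' = w j)
include hpair

lemma exists_not_adj_gt {p y : Fin n} (hpy : p < y) (hw : w p = w y)
    (hnadj : ¬ (letterGraph D w).Adj p y) :
    ∃ p' k', p' < k' ∧ y < k' ∧ w p' = w k' ∧ ¬ (letterGraph D w).Adj p' k' := by
  obtain ⟨m, hm, -⟩ := hG y
  have hpmy := mem_Ioo_of_adj hG hpy hw hnadj (Or.inr rfl) hm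
  obtain ⟨m', hm'm, hwm'⟩ := hpair m
  have hwmy : w m ≠ w y := fun h =>
    false_of_lt_of_lt_of_eq_of_eq hG hpmy.1 hpmy.2 (hw.trans h.symm) h
  have hnadj' : ¬ (letterGraph D w).Adj m m' := fun h =>
    hwmy (by rw [← hwm', (hG m).unique h hm.symm])
  rcases hm'm.lt_or_gt with hlt | hlt
  · have hnadj'' : ¬ (letterGraph D w).Adj m' m := fun h => hnadj' h.symm
    exact ⟨m', m, hlt, (mem_Ioo_of_adj hG hlt hwm' hnadj'' (Or.inr rfl) hm.symm).2,
      hwm', hnadj''⟩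
  · exact ⟨m, m', hlt, (mem_Ioo_of_adj hG hlt hwm'.symm hnadj' (Or.inl rfl) hm.symm).2,
      hwm'.symm, hnadj'⟩

theorem adj_of_lt_of_eq {p y : Fin n} (hpy : p < y) (hw : w p = w y) :
    (letterGraph D w).Adj p y := by
  induction y using WellFoundedGT.induction generalizing p with
  | _ y ih =>
    by_contra hnadj
    obtain ⟨p', k', hlt, hyk, hw', hnadj'⟩ := exists_not_adj_gt hG hpair hpy hw hnadj
    exact hnadj' (ih k' hyk hlt hw')

end letterGraph

theorem matching_r_lettering_general {α : Type*} [Fintype α] {r n : ℕ}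
    (hcard : Fintype.card α = r) (D : α → α → Prop) (w : Fin n → α)
    (h : Nonempty (matchingGraph r ≃g letterGraph D w)) (a : α) :
    ∃ i k : Fin n, i < k ∧ {j : Fin n | w j = a} = {i, k} ∧
      (letterGraph D w).Adj i k := by
  classical
  obtain ⟨e⟩ := h
  have hG := e.existsUnique_adj (matchingGraph_existsUnique_adj r)
  have hn : Fintype.card (Fin n) = 2 * Fintype.card α := by
    rw [hcard, ← Fintype.card_fin (2 * r)]
    exact (Fintype.card_congr e.toEquiv).symm
  have hfiber := card_fiber_eq_of_card_fiber_le (letterGraph.card_fiber_le_two hG) hn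
  have hpair (j : Fin n) : ∃ j', j' ≠ j ∧ w j' = w j := by
    obtain ⟨j', hj', hne⟩ := exists_mem_ne (by rw [hfiber (w j)]; norm_num) j
    exact ⟨j', hne, (mem_filter.mp hj').2⟩
  obtain ⟨x, y, hxy, hs⟩ := card_eq_two.mp (hfiber a)
  have hset : {j | w j = a} = {x, y} := by
    ext j
    simpa using Finset.ext_iff.mp hs j
  have hwxy : w x = w y := by
    rw [show w x = a from hset.ge (Or.inl rfl), show w y = a from hset.ge (Or.inr rfl)]
  rcases hxy.lt_or_gt with hlt | hlt
  · exact ⟨x, y, hlt, hset, letterGraph.adj_of_lt_of_eq hG hpair hlt hwxy⟩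
  · exact ⟨y, x, hlt, hset.trans (Set.pair_comm x y),
      letterGraph.adj_of_lt_of_eq hG hpair hlt hwxy.symm⟩

/-- In every `r`-lettering of `rK₂` (a lettering over an alphabet of size exactly `r`),
each letter occurs at exactly two positions of the word, and these two positions are
adjacent in the letter graph: each letter encodes precisely the two vertices of one edge
of the matching. -/
theorem matching_r_lettering {α : Type*} [Fintype α] {r n : ℕ} (hr : 1 ≤ r)
    (hcard : Fintype.card α = r) (D : α → α → Prop) (w : Fin n → α)
    (h : Nonempty (matchingGraph r ≃g letterGraph D w)) (a : α) :
    ∃ i k : Fin n, i < k ∧ {j : Fin n | w j = a} = {i, k} ∧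
      (letterGraph D w).Adj i k :=
  matching_r_lettering_general hcard D w h a
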